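/- Under the assumptions of the BPUC LP relaxation (with W ≥ C_{a_k} not required), the bound Lb1 is attained: there exists a feasible fractional solution (x, y, l) of the LP relaxation whose objective value equals Lb1. Hence the optimal value of the LP relaxation equals Lb1 exactly. -/

import Mathlib

/-!
Order the facilities by unit cost `r j = f j / C j + c j`. Filling them greedily in that order
gives a feasible point with `y j = l j / C j` whose cost is exactly `Lb1`. Conversely every
feasible point has `y j ≥ l j / C j`, so its cost is at least `∑ r j * l j`, and over loads
`0 ≤ l j ≤ C j` of total `W` this is minimised by the greedy load (fractional knapsack).
-/

open Finset

section GreedyLoad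

variable {ι : Type*} [Fintype ι] [LinearOrder ι]

noncomputable def greedyLoad (u : ι → ℝ) (k : ι) (W : ℝ) (j : ι) : ℝ :=
  if j < k then u j else if j = k then W - ∑ i ∈ univ.filter (fun i => i < k), u i else 0

variable {u : ι → ℝ} {k : ι} {W : ℝ}

theorem sum_filter_le_eq (u : ι → ℝ) (k : ι) :
    ∑ j ∈ univ.filter (fun j => j ≤ k), u j = ∑ j ∈ univ.filter (fun j => j < k), u j + u k := by
  have : univ.filter (fun j => j ≤ k) = insert k (univ.filter (fun j => j < k)) := by
    ext j
    simp [le_iff_lt_or_eq, or_comm]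
  rw [this, sum_insert (by simp), add_comm]

theorem greedyLoad_nonneg (hu : ∀ j, 0 ≤ u j)
    (hW : ∑ j ∈ univ.filter (fun j => j < k), u j ≤ W) (j : ι) :
    0 ≤ greedyLoad u k W j := by
  unfold greedyLoad
  split_ifs
  · exact hu j
  · linarith
  · exact le_rfl

theorem greedyLoad_le (hu : ∀ j, 0 ≤ u j)
    (hW : W ≤ ∑ j ∈ univ.filter (fun j => j ≤ k), u j) (j : ι) :
    greedyLoad u k W j ≤ u j := by
  rw [sum_filter_le_eq] at hW
  unfold greedyLoad
  split_ifs with _ hjk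
  · exact le_rfl
  · subst hjk; linarith
  · exact hu j

theorem sum_mul_greedyLoad (g : ι → ℝ) :
    ∑ j, g j * greedyLoad u k W j =
      ∑ j ∈ univ.filter (fun j => j < k), u j * g j
        + (W - ∑ j ∈ univ.filter (fun j => j < k), u j) * g k := by
  rw [← sum_filter_add_sum_filter_not univ (fun j => j < k)]
  congr 1
  · exact sum_congr rfl fun j hj => by simp_all [greedyLoad, mul_comm]
  · rw [sum_eq_single_of_mem k (by simp) fun j hj hjk => by simp_all [greedyLoad]]
    simp [greedyLoad, mul_comm]

theorem sum_greedyLoad : ∑ j, greedyLoad u k W j = W := by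
  simpa using sum_mul_greedyLoad (u := u) (k := k) (W := W) (fun _ => 1)

theorem sum_mul_greedyLoad_le {g : ι → ℝ} (hg : Monotone g) {l : ι → ℝ}
    (hl0 : ∀ j, 0 ≤ l j) (hlu : ∀ j, l j ≤ u j) (hlW : ∑ j, l j = W) :
    ∑ j, g j * greedyLoad u k W j ≤ ∑ j, g j * l j := by
  -- Pivot at `g k`: the `g k`-part of the difference vanishes since both loads total `W`.
  have hterm : ∀ j, (g j - g k) * (greedyLoad u k W j - l j) ≤ 0 := by
    intro j
    unfold greedyLoad
    split_ifs with hjk hjk'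
    · exact mul_nonpos_of_nonpos_of_nonneg (sub_nonpos.2 (hg hjk.le)) (sub_nonneg.2 (hlu j))
    · simp [hjk']
    · exact mul_nonpos_of_nonneg_of_nonpos (sub_nonneg.2 (hg (not_lt.1 hjk)))
        (by linarith [hl0 j])
  have hsum := sum_nonpos fun j (_ : j ∈ univ) => hterm j
  have hexpand : ∑ j, (g j - g k) * (greedyLoad u k W j - l j) =
      ∑ j, g j * greedyLoad u k W j - ∑ j, g j * l j
        - g k * (∑ j, greedyLoad u k W j - ∑ j, l j) := by
    simp only [mul_sub, sub_mul, sum_sub_distrib, mul_sum]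
    ring
  rw [hexpand, sum_greedyLoad, hlW, sub_self, mul_zero, sub_zero] at hsum
  linarith

end GreedyLoad

section LPRelaxation

variable {ι : Type*} [Fintype ι]

theorem sum_eq_sum_weight_of_assignment {κ : Type*} [Fintype κ] {w : κ → ℝ} {x : κ → ι → ℝ}
    {l : ι → ℝ} (hx : ∀ i, ∑ j, x i j = 1) (hl : ∀ j, ∑ i, w i * x i j = l j) :
    ∑ j, l j = ∑ i, w i := by
  simp_rw [← hl, sum_comm (γ := ι), ← mul_sum, hx, mul_one]

theorem sum_unitCost_mul_le_objective {C f c y l : ι → ℝ} (hC : ∀ j, 0 < C j)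
    (hf : ∀ j, 0 ≤ f j) (hly : ∀ j, l j ≤ C j * y j) :
    ∑ j, (f j / C j + c j) * l j ≤ ∑ j, (f j * y j + c j * l j) := by
  refine sum_le_sum fun j _ => ?_
  have hy : l j / C j ≤ y j := (div_le_iff₀ (hC j)).2 (by linarith [hly j, mul_comm (C j) (y j)])
  calc (f j / C j + c j) * l j = f j * (l j / C j) + c j * l j := by ring
    _ ≤ f j * y j + c j * l j := by gcongr; exact hf j

end LPRelaxation

theorem stmt2_general (m n : ℕ) (C f c : Fin m → ℝ) (w : Fin n → ℝ)
    (hC : ∀ j, 0 < C j) (hf : ∀ j, 0 ≤ f j)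
    (W : ℝ) (hW : W = ∑ i, w i)
    (r : Fin m → ℝ) (hr : ∀ j, r j = f j / C j + c j)
    (a : Equiv.Perm (Fin m)) (ha : Monotone fun j => r (a j))
    (k : Fin m)
    (hk : W ≤ ∑ j ∈ univ.filter (fun j => j ≤ k), C (a j))
    (hkmin : ∑ j ∈ univ.filter (fun j => j < k), C (a j) < W) :
    IsLeast
      {z : ℝ | ∃ (x : Fin n → Fin m → ℝ) (y l : Fin m → ℝ),
        (∀ i j, 0 ≤ x i j) ∧ (∀ i j, x i j ≤ 1) ∧
        (∀ j, 0 ≤ y j) ∧ (∀ j, y j ≤ 1) ∧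
        (∀ j, 0 ≤ l j) ∧
        (∀ i, ∑ j, x i j = 1) ∧
        (∀ j, ∑ i, w i * x i j = l j) ∧
        (∀ j, l j ≤ C j * y j) ∧
        z = ∑ j, (f j * y j + c j * l j)}
      ((∑ j ∈ univ.filter (fun j => j < k), C (a j) * r (a j))
        + (W - ∑ j ∈ univ.filter (fun j => j < k), C (a j)) * r (a k)) := by
  set S := ∑ j ∈ univ.filter (fun j => j < k), C (a j)
  have hW0 : 0 < W := (sum_nonneg fun j _ => (hC (a j)).le).trans_lt hkmin
  set L : Fin m → ℝ := fun b => greedyLoad (fun j => C (a j)) k W (a.symm b) with hL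
  have hL0 (b : Fin m) : 0 ≤ L b := greedyLoad_nonneg (fun j => (hC (a j)).le) hkmin.le _
  have hLC (b : Fin m) : L b ≤ C b := by
    simpa using greedyLoad_le (fun j => (hC (a j)).le) hk (a.symm b)
  have hLsum : ∑ b, L b = W := by rw [Equiv.sum_comp a.symm]; exact sum_greedyLoad
  have hLcost : ∑ b, r b * L b = ∑ j ∈ univ.filter (fun j => j < k), C (a j) * r (a j)
      + (W - S) * r (a k) := by
    rw [← Equiv.sum_comp a]
    simp only [hL, Equiv.symm_apply_apply]
    exact sum_mul_greedyLoad _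
  constructor
  · refine ⟨fun _ b => L b / W, fun b => L b / C b, L, fun _ b => div_nonneg (hL0 b) hW0.le,
      fun _ b => ?_, fun b => div_nonneg (hL0 b) (hC b).le,
      fun b => (div_le_one (hC b)).2 (hLC b), hL0, fun _ => ?_, fun b => ?_,
      fun b => (mul_div_cancel₀ _ (hC b).ne').ge, ?_⟩
    · exact (div_le_one hW0).2 (hLsum ▸ single_le_sum (fun b _ => hL0 b) (mem_univ b))
    · rw [← sum_div, hLsum, div_self hW0.ne']
    · rw [← sum_mul, ← hW]
      field_simp
    · rw [← hLcost]
      exact sum_congr rfl fun b _ => by rw [hr]; ring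
  · rintro z ⟨x, y, l, -, -, -, hy1, hl0, hx, hxl, hly, rfl⟩
    have hlC (b : Fin m) : l b ≤ C b := (hly b).trans (mul_le_of_le_one_right (hC b).le (hy1 b))
    have hlsum : ∑ j, l (a j) = W := by
      rw [Equiv.sum_comp a, sum_eq_sum_weight_of_assignment hx hxl, hW]
    calc _ = ∑ j, r (a j) * greedyLoad (fun j => C (a j)) k W j :=
          (sum_mul_greedyLoad _).symm
      _ ≤ ∑ j, r (a j) * l (a j) :=
          sum_mul_greedyLoad_le ha (fun j => hl0 (a j)) (fun j => hlC (a j)) hlsum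
      _ = ∑ j, (f j / C j + c j) * l j := by
          rw [Equiv.sum_comp a (fun b => r b * l b)]; simp only [hr]
      _ ≤ _ := sum_unitCost_mul_le_objective hC hf hly

/-- the bound `Lb1` is attained by a feasible fractional solution of the
LP relaxation of the basic BPUC formulation, hence the optimal LP value equals `Lb1`. -/
theorem stmt2 (m n : ℕ) (C f c : Fin m → ℝ) (w : Fin n → ℝ)
    (hw : ∀ i, 0 < w i)
    (hC : ∀ j, 0 < C j) (hf : ∀ j, 0 ≤ f j) (hc : ∀ j, 0 ≤ c j)
    (W : ℝ) (hW : W = ∑ i, w i) (hW0 : 0 < W) (hcap : W ≤ ∑ j, C j)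
    (r : Fin m → ℝ) (hr : ∀ j, r j = f j / C j + c j)
    (a : Equiv.Perm (Fin m)) (ha : Monotone fun j => r (a j))
    (k : Fin m)
    (hk : W ≤ ∑ j ∈ univ.filter (fun j => j ≤ k), C (a j))
    (hkmin : ∑ j ∈ univ.filter (fun j => j < k), C (a j) < W) :
    IsLeast
      {z : ℝ | ∃ (x : Fin n → Fin m → ℝ) (y l : Fin m → ℝ),
        (∀ i j, 0 ≤ x i j) ∧ (∀ i j, x i j ≤ 1) ∧
        (∀ j, 0 ≤ y j) ∧ (∀ j, y j ≤ 1) ∧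
        (∀ j, 0 ≤ l j) ∧
        (∀ i, ∑ j, x i j = 1) ∧
        (∀ j, ∑ i, w i * x i j = l j) ∧
        (∀ j, l j ≤ C j * y j) ∧
        z = ∑ j, (f j * y j + c j * l j)}
      ((∑ j ∈ univ.filter (fun j => j < k), C (a j) * r (a j))
        + (W - ∑ j ∈ univ.filter (fun j => j < k), C (a j)) * r (a k)) :=
  stmt2_general m n C f c w hC hf W hW r hr a ha k hk hkmin
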